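/- Quantitative barrier on a sphere: let Φ : ℝ^W → ℝ^d be C², w₀ ∈ ℝ^W, and suppose on the ball B(w₀, r₀) one has c‖Δw‖ ≤ ‖J(w₀)Δw‖ ≤ C‖Δw‖ and ‖Φ(w₀+Δw) − Φ(w₀) − J(w₀)Δw‖ ≤ C‖Δw‖² for ‖Δw‖ ≤ r₀, with constants 0 < c ≤ C < ∞. If ‖f − Φ(w₀)‖ ≤ √(2ε), then for all Δw with ‖Δw‖ = r ≤ r₀: L_f(w₀+Δw) − L_f(w₀) ≥ (c²/2)r² − C²r³ − √(2ε)·C·(r + r²). -/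

import Mathlib

open MeasureTheory Filter Topology Set

/-- The square loss `L_f(w) = (1/2)‖f - Φ(w)‖²`. -/
noncomputable def loss {W d : ℕ} (Φ : EuclideanSpace ℝ (Fin W) → EuclideanSpace ℝ (Fin d))
    (f : EuclideanSpace ℝ (Fin d)) (w : EuclideanSpace ℝ (Fin W)) : ℝ :=
  (1 / 2) * ‖f - Φ w‖ ^ 2

/-!
Write `a = f - Φ(w₀)` and `u = Φ(w₀ + Δw) - Φ(w₀)`. Expanding the square gives
`L_f(w₀ + Δw) - L_f(w₀) = ‖u‖²/2 - ⟪a, u⟫`. The Jacobian and Taylor bounds squeeze `‖u‖` between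
`c r - C r²` and `C r + C r²`; the lower bound controls `‖u‖²/2` from below, and Cauchy–Schwarz with
`‖a‖ ≤ √(2ε)` controls the cross term.
-/

theorem half_norm_sub_sq_sub_half_norm_sq {E : Type*} [NormedAddCommGroup E]
    [InnerProductSpace ℝ E] (a u : E) :
    1 / 2 * ‖a - u‖ ^ 2 - 1 / 2 * ‖a‖ ^ 2 = 1 / 2 * ‖u‖ ^ 2 - inner ℝ a u := by
  rw [norm_sub_sq_real]
  ring

theorem loss_add_sub_loss {W d : ℕ} (Φ : EuclideanSpace ℝ (Fin W) → EuclideanSpace ℝ (Fin d))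
    (f : EuclideanSpace ℝ (Fin d)) (w₀ Δw : EuclideanSpace ℝ (Fin W)) :
    loss Φ f (w₀ + Δw) - loss Φ f w₀ =
      1 / 2 * ‖Φ (w₀ + Δw) - Φ w₀‖ ^ 2 - inner ℝ (f - Φ w₀) (Φ (w₀ + Δw) - Φ w₀) := by
  rw [loss, loss, ← half_norm_sub_sq_sub_half_norm_sq, sub_sub_sub_cancel_right]

theorem half_sq_lower_bound {c C r x : ℝ} (hc : 0 ≤ c) (hcC : c ≤ C) (hr : 0 ≤ r)
    (h : c * r - C * r ^ 2 ≤ x) :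
    c ^ 2 / 2 * r ^ 2 - C ^ 2 * r ^ 3 ≤ x ^ 2 / 2 := by
  have hcubic : c * C * r ^ 3 ≤ C ^ 2 * r ^ 3 := by
    gcongr
    nlinarith
  rcases le_or_gt 0 (c * r - C * r ^ 2) with hpos | hneg
  · -- `(c r - C r²)² / 2 = c² r² / 2 - c C r³ + C² r⁴ / 2`
    nlinarith [pow_le_pow_left₀ hpos h 2, sq_nonneg (C * r ^ 2)]
  · -- here `c r < C r²`, so `c² r² ≤ c C r³`
    nlinarith [mul_le_mul_of_nonneg_left hneg.le (mul_nonneg hc hr), sq_nonneg x]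

theorem barrier_on_sphere (W d : ℕ)
    (Φ : EuclideanSpace ℝ (Fin W) → EuclideanSpace ℝ (Fin d))
    (w₀ : EuclideanSpace ℝ (Fin W)) (r₀ c C : ℝ)
    (hc : 0 < c) (hcC : c ≤ C)
    (hJ : ∀ Δw : EuclideanSpace ℝ (Fin W), ‖Δw‖ ≤ r₀ →
      c * ‖Δw‖ ≤ ‖fderiv ℝ Φ w₀ Δw‖ ∧ ‖fderiv ℝ Φ w₀ Δw‖ ≤ C * ‖Δw‖)
    (hTaylor : ∀ Δw : EuclideanSpace ℝ (Fin W), ‖Δw‖ ≤ r₀ →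
      ‖Φ (w₀ + Δw) - Φ w₀ - fderiv ℝ Φ w₀ Δw‖ ≤ C * ‖Δw‖ ^ 2)
    (ε : ℝ)
    (f : EuclideanSpace ℝ (Fin d)) (hf : ‖f - Φ w₀‖ ≤ Real.sqrt (2 * ε)) :
    ∀ (Δw : EuclideanSpace ℝ (Fin W)) (r : ℝ), ‖Δw‖ = r → r ≤ r₀ →
      loss Φ f (w₀ + Δw) - loss Φ f w₀ ≥
        (c ^ 2 / 2) * r ^ 2 - C ^ 2 * r ^ 3 - Real.sqrt (2 * ε) * C * (r + r ^ 2) := by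
  rintro Δw r rfl hr
  obtain ⟨hJ_lower, hJ_upper⟩ := hJ Δw hr
  have hTaylor_Δw := hTaylor Δw hr
  set u := Φ (w₀ + Δw) - Φ w₀
  obtain ⟨hu_lower, hu_upper⟩ := abs_le.mp (abs_norm_sub_norm_le u (fderiv ℝ Φ w₀ Δw))
  have hquad : c ^ 2 / 2 * ‖Δw‖ ^ 2 - C ^ 2 * ‖Δw‖ ^ 3 ≤ ‖u‖ ^ 2 / 2 :=
    half_sq_lower_bound hc.le hcC (norm_nonneg Δw) (by linarith)
  have hcross : inner ℝ (f - Φ w₀) u ≤ Real.sqrt (2 * ε) * C * (‖Δw‖ + ‖Δw‖ ^ 2) :=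
    calc inner ℝ (f - Φ w₀) u ≤ ‖f - Φ w₀‖ * ‖u‖ := real_inner_le_norm _ _
      _ ≤ Real.sqrt (2 * ε) * (C * ‖Δw‖ + C * ‖Δw‖ ^ 2) :=
        mul_le_mul hf (by linarith) (norm_nonneg u) (Real.sqrt_nonneg _)
      _ = Real.sqrt (2 * ε) * C * (‖Δw‖ + ‖Δw‖ ^ 2) := by ring
  rw [loss_add_sub_loss]
  linarith
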